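/- arXiv:1107.5495 — 5 statements merged into one kernel-verified Lean document; each statement's English description precedes it below -/
import Mathlib

section
/- Let n be a positive integer, let b_1, …, b_n be nonzero complex numbers with b_{n+1-i} equal to the complex conjugate of b_i for all i = 1, …, n, and let z_1, …, z_n be distinct complex numbers of absolute value 1, none equal to 1, with z_{n+1-i} equal to the complex conjugate of z_i for all i = 1, …, n. Then the sums s_k = ∑_{j=1}^n b_j z_j^k are real for every positive integer k, and liminf_{k→∞} s_k ≤ −(∑_{j=1}^n |b_j|²)/(∑_{j=1}^n |b_j|). -/
/-! The power sums `s k` are real because the reflection `i ↦ n + 1 - i` conjugates each term,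
and `|s k| ≤ B := ∑ ‖b j‖`. Averaging over `k`, the Cesàro mean of `s k` tends to `0` (no `z j`
equals `1`), and that of `s k ^ 2 = ‖s k‖ ^ 2` tends to `Q := ∑ ‖b j‖ ^ 2`: the `z j` are distinct
points of the unit circle, so only the diagonal terms of `‖s k‖ ^ 2` survive. If `s k > m` for all
large `k`, then `(s k - m) * (B - s k) ≥ 0` eventually, while its Cesàro mean tends to
`-Q - m * B`; hence `m ≤ -Q / B`. -/

open Complex Filter Finset ComplexConjugate Topology

noncomputable def cesaroMean {E : Type*} [AddCommMonoid E] [Module ℝ E] (u : ℕ → E) (N : ℕ) : E :=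
  (N⁻¹ : ℝ) • ∑ k ∈ range N, u k

theorem cesaroMean_sum {E ι : Type*} [AddCommMonoid E] [Module ℝ E] (t : Finset ι)
    (u : ι → ℕ → E) (N : ℕ) :
    cesaroMean (fun k => ∑ j ∈ t, u j k) N = ∑ j ∈ t, cesaroMean (u j) N := by
  simp only [cesaroMean, sum_comm (s := range N), smul_sum]

theorem cesaroMean_const_mul {A : Type*} [NonUnitalNonAssocSemiring A] [Module ℝ A]
    [SMulCommClass ℝ A A] (c : A) (u : ℕ → A) (N : ℕ) :
    cesaroMean (fun k => c * u k) N = c * cesaroMean u N := by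
  simp only [cesaroMean, ← mul_sum, mul_smul_comm]

theorem ofReal_cesaroMean (u : ℕ → ℝ) (N : ℕ) :
    ((cesaroMean u N : ℝ) : ℂ) = cesaroMean (fun k => (u k : ℂ)) N := by
  simp [cesaroMean]

theorem tendsto_cesaroMean_of_tendsto {E : Type*} [NormedAddCommGroup E] [NormedSpace ℝ E]
    {u : ℕ → E} {l : E} (h : Tendsto u atTop (𝓝 l)) : Tendsto (cesaroMean u) atTop (𝓝 l) :=
  h.cesaro_smul

theorem nonneg_of_tendsto_cesaroMean {f : ℕ → ℝ} {L : ℝ} (hf : ∀ᶠ k in atTop, 0 ≤ f k)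
    (h : Tendsto (cesaroMean f) atTop (𝓝 L)) : 0 ≤ L := by
  obtain ⟨K, hK⟩ := eventually_atTop.mp hf
  have hhead : Tendsto (fun N : ℕ => (N : ℝ)⁻¹ * ∑ k ∈ range K, f k) atTop (𝓝 0) := by
    simpa using (tendsto_inv_atTop_nhds_zero_nat (𝕜 := ℝ)).mul_const (∑ k ∈ range K, f k)
  refine le_of_tendsto_of_tendsto hhead h (eventually_atTop.mpr ⟨K, fun N hN => ?_⟩)
  rw [cesaroMean, smul_eq_mul, ← sum_range_add_sum_Ico f hN]
  have htail : 0 ≤ ∑ k ∈ Ico K N, f k := sum_nonneg fun k hk => hK k (mem_Ico.mp hk).1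
  exact mul_le_mul_of_nonneg_left (le_add_of_nonneg_right htail) (by positivity)

theorem liminf_le_neg_div_of_tendsto_cesaroMean {s : ℕ → ℝ} {B Q : ℝ} (hB : 0 < B)
    (hs : ∀ k, |s k| ≤ B) (hmean : Tendsto (cesaroMean s) atTop (𝓝 0))
    (hsq : Tendsto (cesaroMean fun k => s k ^ 2) atTop (𝓝 Q)) :
    liminf s atTop ≤ -Q / B := by
  refine le_of_forall_lt_imp_le_of_dense fun m hm => ?_
  have hbdd : IsBoundedUnder (· ≥ ·) atTop s :=
    isBoundedUnder_of ⟨-B, fun k => (abs_le.mp (hs k)).1⟩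
  have hpos : ∀ᶠ k in atTop, 0 ≤ (s k - m) * (B - s k) :=
    (eventually_lt_of_lt_liminf hm hbdd).mono fun k hk =>
      mul_nonneg (by linarith) (by linarith [(abs_le.mp (hs k)).2])
  have hlim : Tendsto (cesaroMean fun k => (s k - m) * (B - s k)) atTop
      (𝓝 ((B + m) * 0 - Q - m * B)) := by
    refine (((hmean.const_mul (B + m)).sub hsq).sub
      (tendsto_cesaroMean_of_tendsto tendsto_const_nhds)).congr fun N => ?_
    simp only [cesaroMean, smul_eq_mul, mul_sum, ← sum_sub_distrib]
    exact sum_congr rfl fun k _ => by ring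
  have := nonneg_of_tendsto_cesaroMean hpos hlim
  rw [le_div_iff₀ hB]
  linarith

section PowerSums

variable {ι : Type*}

theorem tendsto_cesaroMean_pow {w : ℂ} (hw : ‖w‖ = 1) :
    Tendsto (cesaroMean (w ^ ·)) atTop (𝓝 (if w = 1 then 1 else 0)) := by
  split_ifs with h1
  · simpa [h1] using tendsto_cesaroMean_of_tendsto (tendsto_const_nhds (x := (1 : ℂ)))
  have hw1 : 0 < ‖w - 1‖ := norm_pos_iff.mpr (sub_ne_zero.mpr h1)
  refine squeeze_zero_norm (a := fun N : ℕ => (N : ℝ)⁻¹ * (2 / ‖w - 1‖)) (fun N => ?_)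
    (by simpa using (tendsto_inv_atTop_nhds_zero_nat (𝕜 := ℝ)).mul_const (2 / ‖w - 1‖))
  have hgeom : ‖w ^ N - 1‖ ≤ 2 := (norm_sub_le _ _).trans (by simp [hw]; norm_num)
  rw [cesaroMean, geom_sum_eq h1, norm_smul, norm_div, Real.norm_of_nonneg (by positivity)]
  gcongr

theorem norm_sum_mul_pow_le (t : Finset ι) (c w : ι → ℂ) (hw : ∀ j ∈ t, ‖w j‖ ≤ 1) (k : ℕ) :
    ‖∑ j ∈ t, c j * w j ^ k‖ ≤ ∑ j ∈ t, ‖c j‖ :=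
  (norm_sum_le _ _).trans <| sum_le_sum fun j hj => by
    rw [norm_mul, norm_pow]
    exact mul_le_of_le_one_right (norm_nonneg _) (pow_le_one₀ (norm_nonneg _) (hw j hj))

theorem tendsto_cesaroMean_sum_mul_pow (t : Finset ι) (c w : ι → ℂ) (hw : ∀ j ∈ t, ‖w j‖ = 1) :
    Tendsto (cesaroMean fun k => ∑ j ∈ t, c j * w j ^ k) atTop (𝓝 (∑ j ∈ t with w j = 1, c j)) := by
  have hmean : (cesaroMean fun k => ∑ j ∈ t, c j * w j ^ k) =
      fun N => ∑ j ∈ t, c j * cesaroMean (w j ^ ·) N := by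
    ext N
    simp only [cesaroMean_sum, cesaroMean_const_mul]
  rw [hmean, sum_filter]
  simpa using tendsto_finsetSum t fun j hj => (tendsto_cesaroMean_pow (hw j hj)).const_mul (c j)

theorem mul_conj_eq_one_iff {u v : ℂ} (hv : ‖v‖ = 1) : u * conj v = 1 ↔ u = v := by
  rw [← RCLike.inv_eq_conj hv, mul_inv_eq_one₀ (norm_ne_zero_iff.mp (by simp [hv]))]

theorem sum_mul_pow_mul_conj (t : Finset ι) (c w : ι → ℂ) (k : ℕ) :
    (∑ j ∈ t, c j * w j ^ k) * conj (∑ j ∈ t, c j * w j ^ k) =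
      ∑ p ∈ t ×ˢ t, c p.1 * conj (c p.2) * (w p.1 * conj (w p.2)) ^ k := by
  rw [map_sum, sum_mul_sum, sum_product]
  refine sum_congr rfl fun j _ => sum_congr rfl fun l _ => ?_
  simp only [map_mul, map_pow]
  ring

theorem tendsto_cesaroMean_norm_sum_mul_pow_sq (t : Finset ι) (c w : ι → ℂ)
    (hw : ∀ j ∈ t, ‖w j‖ = 1) (hinj : Set.InjOn w t) :
    Tendsto (cesaroMean fun k => ‖∑ j ∈ t, c j * w j ^ k‖ ^ 2) atTop
      (𝓝 (∑ j ∈ t, ‖c j‖ ^ 2)) := by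
  have hdiag : (t ×ˢ t).filter (fun p => w p.1 * conj (w p.2) = 1) = t.diag := by
    ext ⟨j, l⟩
    simp only [mem_filter, mem_product, mem_diag]
    constructor
    · rintro ⟨⟨hj, hl⟩, h⟩
      exact ⟨hj, hinj hj hl ((mul_conj_eq_one_iff (hw l hl)).mp h)⟩
    · rintro ⟨hj, rfl⟩
      exact ⟨⟨hj, hj⟩, (mul_conj_eq_one_iff (hw j hj)).mpr rfl⟩
  have hlim := tendsto_cesaroMean_sum_mul_pow (t ×ˢ t) (fun p => c p.1 * conj (c p.2))
    (fun p => w p.1 * conj (w p.2)) fun p hp => by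
      rw [mem_product] at hp
      rw [norm_mul, norm_conj, hw _ hp.1, hw _ hp.2, mul_one]
  rw [hdiag, diag, sum_map] at hlim
  rw [← tendsto_ofReal_iff]
  convert hlim using 2 with N
  · rw [ofReal_cesaroMean]
    simp only [ofReal_pow, ← mul_conj', sum_mul_pow_mul_conj]
  · push_cast
    simp [mul_conj']

end PowerSums

theorem sum_Icc_reflect {M : Type*} [AddCommMonoid M] (f : ℕ → M) (n : ℕ) :
    ∑ i ∈ Icc 1 n, f (n + 1 - i) = ∑ i ∈ Icc 1 n, f i :=
  sum_nbij' (fun i => n + 1 - i) (fun i => n + 1 - i) reflect_mem reflect_mem reflect_reflect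
    reflect_reflect fun _ _ => rfl
where
  reflect_mem (i : ℕ) (hi : i ∈ Icc 1 n) : n + 1 - i ∈ Icc 1 n := by
    rw [mem_Icc] at hi ⊢
    omega
  reflect_reflect (i : ℕ) (hi : i ∈ Icc 1 n) : n + 1 - (n + 1 - i) = i := by
    rw [mem_Icc] at hi
    omega

/-- **Theorem 1 (Beukers–Tijdeman).**
Let `n ≥ 1`, let `b 1, …, b n` be nonzero complex numbers with
`b (n+1-i) = conj (b i)` for all `i = 1, …, n`, and let `z 1, …, z n` be distinct
complex numbers of absolute value `1`, none equal to `1`, with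
`z (n+1-i) = conj (z i)`.  Then each power sum `∑ j, b j * z j ^ k` is real, and
`liminf_{k→∞} ∑ j, b j * z j ^ k ≤ -(∑ j |b j|²)/(∑ j |b j|)`. -/
theorem one_sided_power_sum_general
    (n : ℕ) (hn : 1 ≤ n) (b z : ℕ → ℂ)
    (hb0 : ∀ i ∈ Finset.Icc 1 n, b i ≠ 0)
    (hbconj : ∀ i ∈ Finset.Icc 1 n, b (n + 1 - i) = conj (b i))
    (hzabs : ∀ i ∈ Finset.Icc 1 n, ‖z i‖ = 1)
    (hz1 : ∀ i ∈ Finset.Icc 1 n, z i ≠ 1)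
    (hzdist : Set.InjOn z (Set.Icc 1 n))
    (hzconj : ∀ i ∈ Finset.Icc 1 n, z (n + 1 - i) = conj (z i)) :
    (∀ k : ℕ, 1 ≤ k → (∑ j ∈ Finset.Icc 1 n, b j * z j ^ k).im = 0) ∧
      Filter.liminf (fun k : ℕ => (∑ j ∈ Finset.Icc 1 n, b j * z j ^ k).re) Filter.atTop ≤
        -(∑ j ∈ Finset.Icc 1 n, ‖b j‖ ^ 2) /
          (∑ j ∈ Finset.Icc 1 n, ‖b j‖) := by
  have hreal (k : ℕ) : (∑ j ∈ Icc 1 n, b j * z j ^ k).im = 0 := by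
    rw [← conj_eq_iff_im, map_sum, ← sum_Icc_reflect]
    refine sum_congr rfl fun i hi => ?_
    rw [hbconj i hi, hzconj i hi, map_mul, map_pow, conj_conj, conj_conj]
  refine ⟨fun k _ => hreal k, liminf_le_neg_div_of_tendsto_cesaroMean ?_
    (fun k => (abs_re_le_norm _).trans (norm_sum_mul_pow_le _ b z (fun j hj => (hzabs j hj).le) k))
    ?_ ?_⟩
  · have h1 : 1 ∈ Icc 1 n := mem_Icc.mpr ⟨le_rfl, hn⟩
    exact sum_pos' (fun _ _ => norm_nonneg _) ⟨1, h1, norm_pos_iff.mpr (hb0 1 h1)⟩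
  · have hlim := tendsto_cesaroMean_sum_mul_pow (Icc 1 n) b z hzabs
    rw [filter_false_of_mem hz1, sum_empty] at hlim
    rw [← tendsto_ofReal_iff, ofReal_zero]
    convert hlim using 2 with N
    rw [ofReal_cesaroMean]
    simp only [conj_eq_iff_re.mp (conj_eq_iff_im.mpr (hreal _))]
  · convert tendsto_cesaroMean_norm_sum_mul_pow_sq (Icc 1 n) b z hzabs (by simpa using hzdist)
      using 3 with k
    rw [← abs_re_eq_norm.mpr (hreal k), sq_abs]
end

section
/- Let n be a positive integer, let b_1, …, b_n be positive real numbers with b_{n+1-i} = b_i for all i = 1, …, n, and let z_1, …, z_n be complex numbers (not necessarily distinct) of absolute value 1, none equal to 1, with z_{n+1-i} equal to the complex conjugate of z_i for all i = 1, …, n. Then liminf_{k→∞} ∑_{j=1}^n b_j z_j^k ≤ −(∑_{j=1}^n b_j²)/(∑_{j=1}^n b_j). -/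
/-! The power sums `x k = ∑ b_j z_j ^ k` are real and bounded by `B = ∑ b_j`. Since
`(1/N) ∑_{k<N} w ^ k → [w = 1]` on the closed unit disc, the Cesàro means of `x k` tend to `0`,
and those of `x k ^ 2 = ∑_{i,j} b_i b_j (z_i conj z_j) ^ k` tend to
`D = ∑_{z_i conj z_j = 1} b_i b_j ≥ ∑ b_j ^ 2`. If `L < x k` eventually, averaging
`(x k - L) (B - x k) ≥ 0` gives `0 ≤ -D - L B`, so `L ≤ -D / B`. -/

open Complex Filter Finset ComplexConjugate Topology

theorem Complex.tendsto_sum_range_pow_div {w : ℂ} (hw : ‖w‖ ≤ 1) :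
    Tendsto (fun N : ℕ => (∑ k ∈ range N, w ^ k) / N) atTop (𝓝 (if w = 1 then 1 else 0)) := by
  split_ifs with h
  · subst h
    simp only [one_pow, sum_const, card_range, nsmul_eq_mul, mul_one]
    exact tendsto_const_nhds.congr' <|
      (eventually_ne_atTop 0).mono fun N hN => (div_self (Nat.cast_ne_zero.2 hN)).symm
  · have hbound : ∀ N : ℕ, ‖(∑ k ∈ range N, w ^ k) / N‖ ≤ 2 / ‖w - 1‖ / N := by
      intro N
      rw [geom_sum_eq h, norm_div, norm_div, norm_natCast]
      gcongr
      calc ‖w ^ N - 1‖ ≤ ‖w‖ ^ N + 1 := by simpa using norm_sub_le (w ^ N) 1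
        _ ≤ 2 := by linarith [pow_le_one₀ (norm_nonneg w) hw (n := N)]
    exact squeeze_zero_norm hbound (tendsto_const_div_atTop_nhds_zero_nat _)

theorem Complex.tendsto_sum_range_sum_mul_pow_div {ι : Type*} (s : Finset ι) (c w : ι → ℂ)
    (hw : ∀ j ∈ s, ‖w j‖ ≤ 1) :
    Tendsto (fun N : ℕ => (∑ k ∈ range N, ∑ j ∈ s, c j * w j ^ k) / N) atTop
      (𝓝 (∑ j ∈ s with w j = 1, c j)) := by
  have hswap : ∀ N : ℕ, (∑ k ∈ range N, ∑ j ∈ s, c j * w j ^ k) / N =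
      ∑ j ∈ s, c j * ((∑ k ∈ range N, w j ^ k) / N) := by
    intro N
    simp only [sum_comm (s := range N), sum_div, ← mul_sum, mul_div_assoc]
  simp only [hswap, sum_filter]
  refine tendsto_finsetSum _ fun j hj => ?_
  simpa only [mul_ite, mul_one, mul_zero] using
    (tendsto_sum_range_pow_div (hw j hj)).const_mul (c j)

theorem Complex.tendsto_sum_range_re_div {f : ℕ → ℂ} {l : ℂ}
    (h : Tendsto (fun N : ℕ => (∑ k ∈ range N, f k) / N) atTop (𝓝 l)) :
    Tendsto (fun N : ℕ => (∑ k ∈ range N, (f k).re) / N) atTop (𝓝 l.re) := by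
  simpa only [Function.comp_def, div_natCast_re, re_sum] using (continuous_re.tendsto l).comp h

theorem Complex.sum_mul_pow_mul_conj {ι : Type*} (s : Finset ι) (c z : ι → ℂ) (k : ℕ) :
    (∑ i ∈ s, c i * z i ^ k) * conj (∑ i ∈ s, c i * z i ^ k) =
      ∑ q ∈ s ×ˢ s, c q.1 * conj (c q.2) * (z q.1 * conj (z q.2)) ^ k := by
  simp only [map_sum, map_mul, map_pow, sum_mul_sum, ← sum_product']
  refine sum_congr rfl fun q _ => ?_
  ring

theorem Complex.tendsto_sum_range_normSq_div {ι : Type*} (s : Finset ι) (b : ι → ℝ) (z : ι → ℂ)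
    (hz : ∀ j ∈ s, ‖z j‖ ≤ 1) :
    Tendsto (fun N : ℕ => (∑ k ∈ range N, normSq (∑ j ∈ s, (b j : ℂ) * z j ^ k)) / N) atTop
      (𝓝 (∑ q ∈ s ×ˢ s with z q.1 * conj (z q.2) = 1, b q.1 * b q.2)) := by
  have hw : ∀ q ∈ s ×ˢ s, ‖z q.1 * conj (z q.2)‖ ≤ 1 := fun q hq => by
    rw [mem_product] at hq
    simpa using mul_le_one₀ (hz _ hq.1) (norm_nonneg _) (hz _ hq.2)
  have := tendsto_sum_range_re_div <|
    tendsto_sum_range_sum_mul_pow_div (s ×ˢ s) (fun q => ((b q.1 * b q.2 : ℝ) : ℂ)) _ hw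
  rw [← ofReal_sum, ofReal_re] at this
  refine this.congr fun N => ?_
  congr 1
  refine sum_congr rfl fun k _ => ?_
  rw [← ofReal_re (normSq _), ← mul_conj, sum_mul_pow_mul_conj]
  simp only [conj_ofReal, ofReal_mul]

theorem Complex.norm_sum_mul_pow_le {ι : Type*} (s : Finset ι) {b : ι → ℝ}
    (hb : ∀ j ∈ s, 0 ≤ b j) {z : ι → ℂ} (hz : ∀ j ∈ s, ‖z j‖ ≤ 1) (k : ℕ) :
    ‖∑ j ∈ s, (b j : ℂ) * z j ^ k‖ ≤ ∑ j ∈ s, b j := by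
  refine (norm_sum_le _ _).trans <| sum_le_sum fun j hj => ?_
  rw [norm_mul, norm_pow, norm_real, Real.norm_of_nonneg (hb j hj)]
  exact mul_le_of_le_one_right (hb j hj) (pow_le_one₀ (norm_nonneg _) (hz j hj))

theorem Complex.im_sum_mul_pow_eq_zero {ι : Type*} {s : Finset ι} (σ : ι → ι)
    (hσ : ∀ i ∈ s, σ i ∈ s) (hσσ : ∀ i ∈ s, σ (σ i) = i) {b : ι → ℝ} {z : ι → ℂ}
    (hb : ∀ i ∈ s, b (σ i) = b i) (hz : ∀ i ∈ s, z (σ i) = conj (z i)) (k : ℕ) :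
    (∑ i ∈ s, (b i : ℂ) * z i ^ k).im = 0 := by
  rw [← conj_eq_iff_im]
  simp only [map_sum, map_mul, map_pow, conj_ofReal]
  exact sum_nbij' σ σ hσ hσ hσσ hσσ fun i hi => by rw [hb i hi, hz i hi]

theorem Real.nonneg_of_tendsto_sum_range_div {f : ℕ → ℝ} {l : ℝ} (hf : ∀ᶠ k in atTop, 0 ≤ f k)
    (h : Tendsto (fun N : ℕ => (∑ k ∈ range N, f k) / N) atTop (𝓝 l)) : 0 ≤ l := by
  obtain ⟨K, hK⟩ := eventually_atTop.1 hf
  refine le_of_tendsto_of_tendsto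
    (tendsto_const_div_atTop_nhds_zero_nat (∑ k ∈ range K, f k)) h ?_
  filter_upwards [eventually_ge_atTop K] with N hN
  gcongr
  intro k _ hkK
  exact hK k (by simpa using hkK)

theorem sum_sq_le_sum_mul_filter {ι : Type*} (s : Finset ι) {b : ι → ℝ} (hb : ∀ i ∈ s, 0 ≤ b i)
    (p : ι → ι → Prop) [DecidableRel p] (hp : ∀ i ∈ s, p i i) :
    ∑ i ∈ s, b i ^ 2 ≤ ∑ q ∈ s ×ˢ s with p q.1 q.2, b q.1 * b q.2 := by
  have hdiag : ∑ i ∈ s, b i ^ 2 = ∑ q ∈ s.diag, b q.1 * b q.2 := by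
    simp only [sum_diag, sq]
  rw [hdiag]
  refine sum_le_sum_of_subset_of_nonneg (fun q hq => ?_) fun q hq _ => ?_
  · obtain ⟨hq1, hq⟩ := mem_diag.1 hq
    obtain ⟨i, j⟩ := q
    simp only at hq1 hq
    subst hq
    simpa [mem_filter, mem_product] using ⟨hq1, hp i hq1⟩
  · obtain ⟨hq1, hq2⟩ := mem_product.1 (mem_filter.1 hq).1
    exact mul_nonneg (hb _ hq1) (hb _ hq2)

theorem Real.liminf_le_neg_div_of_tendsto_sum_range_div {x : ℕ → ℝ} {B D : ℝ} (hB : 0 < B)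
    (hx : ∀ k, |x k| ≤ B)
    (hmean : Tendsto (fun N : ℕ => (∑ k ∈ range N, x k) / N) atTop (𝓝 0))
    (hmeanSq : Tendsto (fun N : ℕ => (∑ k ∈ range N, x k ^ 2) / N) atTop (𝓝 D)) :
    liminf x atTop ≤ -D / B := by
  refine le_of_forall_lt_imp_le_of_dense fun L hL => ?_
  have hbdd : IsBoundedUnder (· ≥ ·) atTop x :=
    isBoundedUnder_of ⟨-B, fun k => neg_le_of_abs_le (hx k)⟩
  have hpos : ∀ᶠ k in atTop, 0 ≤ (x k - L) * (B - x k) := by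
    filter_upwards [eventually_lt_of_lt_liminf hL hbdd] with k hk
    exact mul_nonneg (by linarith) (by linarith [le_abs_self (x k), hx k])
  have hexpand : ∀ N : ℕ, N ≠ 0 →
      (B + L) * ((∑ k ∈ range N, x k) / N) - (∑ k ∈ range N, x k ^ 2) / N - L * B =
        (∑ k ∈ range N, (x k - L) * (B - x k)) / N := by
    intro N hN
    have hsum : ∑ k ∈ range N, (x k - L) * (B - x k) =
        (B + L) * ∑ k ∈ range N, x k - ∑ k ∈ range N, x k ^ 2 - N * (L * B) := by
      rw [show (N : ℝ) * (L * B) = ∑ _k ∈ range N, L * B by simp, mul_sum, ← sum_sub_distrib,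
        ← sum_sub_distrib]
      exact sum_congr rfl fun k _ => by ring
    rw [hsum]
    field_simp
  have hlim : Tendsto (fun N : ℕ => (∑ k ∈ range N, (x k - L) * (B - x k)) / N) atTop
      (𝓝 ((B + L) * 0 - D - L * B)) :=
    (((hmean.const_mul (B + L)).sub hmeanSq).sub_const (L * B)).congr' <|
      (eventually_ne_atTop 0).mono hexpand
  have := Real.nonneg_of_tendsto_sum_range_div hpos hlim
  rw [le_div_iff₀ hB]
  linarith

/-- **Theorem 2 (Beukers–Tijdeman).**
Let `n ≥ 1`, let `b 1, …, b n` be positive real numbers with `b (n+1-i) = b i`, and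
let `z 1, …, z n` be (not necessarily distinct) complex numbers of absolute value `1`,
none equal to `1`, with `z (n+1-i) = conj (z i)`.  Then
`liminf_{k→∞} ∑ j, b j * z j ^ k ≤ -(∑ j b j ^ 2)/(∑ j b j)`. -/
theorem one_sided_power_sum_positive_coeffs
    (n : ℕ) (hn : 1 ≤ n) (b : ℕ → ℝ) (z : ℕ → ℂ)
    (hb0 : ∀ i ∈ Finset.Icc 1 n, 0 < b i)
    (hbconj : ∀ i ∈ Finset.Icc 1 n, b (n + 1 - i) = b i)
    (hzabs : ∀ i ∈ Finset.Icc 1 n, ‖z i‖ = 1)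
    (hz1 : ∀ i ∈ Finset.Icc 1 n, z i ≠ 1)
    (hzconj : ∀ i ∈ Finset.Icc 1 n, z (n + 1 - i) = conj (z i)) :
    Filter.liminf (fun k : ℕ => (∑ j ∈ Finset.Icc 1 n, (b j : ℂ) * z j ^ k).re)
        Filter.atTop ≤
      -(∑ j ∈ Finset.Icc 1 n, b j ^ 2) / (∑ j ∈ Finset.Icc 1 n, b j) := by
  set s := Icc 1 n
  set S : ℕ → ℂ := fun k => ∑ j ∈ s, (b j : ℂ) * z j ^ k
  have hzle : ∀ j ∈ s, ‖z j‖ ≤ 1 := fun j hj => (hzabs j hj).le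
  have hreal : ∀ k, (S k).im = 0 := im_sum_mul_pow_eq_zero (fun i => n + 1 - i)
    (fun i hi => by simp only [s, mem_Icc] at hi ⊢; omega)
    (fun i hi => by simp only [s, mem_Icc] at hi; omega) hbconj hzconj
  have hnorm : ∀ k, |(S k).re| ≤ ∑ j ∈ s, b j := fun k =>
    (abs_re_le_norm _).trans (norm_sum_mul_pow_le s (fun j hj => (hb0 j hj).le) hzle k)
  have hmean : Tendsto (fun N : ℕ => (∑ k ∈ range N, (S k).re) / N) atTop (𝓝 0) := by
    have := tendsto_sum_range_re_div <|
      tendsto_sum_range_sum_mul_pow_div s (fun j => (b j : ℂ)) z hzle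
    rwa [filter_eq_empty_iff.2 hz1, sum_empty, zero_re] at this
  have hnormSq : ∀ k, normSq (S k) = (S k).re ^ 2 := fun k => by
    rw [normSq_apply, hreal k]; ring
  have hmeanSq : Tendsto (fun N : ℕ => (∑ k ∈ range N, (S k).re ^ 2) / N) atTop
      (𝓝 (∑ q ∈ s ×ˢ s with z q.1 * conj (z q.2) = 1, b q.1 * b q.2)) :=
    (tendsto_sum_range_normSq_div s b z hzle).congr fun N =>
      congrArg (· / (N : ℝ)) (sum_congr rfl fun k _ => hnormSq k)
  have hB : 0 < ∑ j ∈ s, b j := sum_pos hb0 (nonempty_Icc.2 hn)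
  calc liminf (fun k => (S k).re) atTop
      ≤ -(∑ q ∈ s ×ˢ s with z q.1 * conj (z q.2) = 1, b q.1 * b q.2) / ∑ j ∈ s, b j :=
        Real.liminf_le_neg_div_of_tendsto_sum_range_div hB hnorm hmean hmeanSq
    _ ≤ -(∑ j ∈ s, b j ^ 2) / ∑ j ∈ s, b j := by
        refine div_le_div_of_nonneg_right (neg_le_neg ?_) hB.le
        exact sum_sq_le_sum_mul_filter s (fun i hi => (hb0 i hi).le)
          (fun i j => z i * conj (z j) = 1) fun i hi => by
            rw [mul_conj, normSq_eq_norm_sq, hzabs i hi]; simp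
end

section
/- Let n be a positive integer, let b_1, …, b_n be complex numbers, and let z_1, …, z_n be complex numbers of absolute value 1. Then liminf_{k→∞} Re(∑_{j=1}^n b_j z_j^k) = inf_{k≥1} Re(∑_{j=1}^n b_j z_j^k); i.e., the liminf of the real parts of the power sums as k → ∞ coincides with their infimum over all positive integers k. -/
open Complex Filter Finset

/-!
Every power `g ^ k` of an element of a compact group is a cluster point of the sequence `g ^ m`
(on the torus this is Dirichlet's simultaneous approximation). So for continuous `F`, each value
`F (g ^ k)` is a cluster point of `F (g ^ m)` and bounds its liminf from above; the reverse
inequality is trivial. The real part of the power sum is such a function of the point `(z_j)_j`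
of the torus `Circleⁿ`.
-/

section CompactGroup

variable {G : Type*} [Group G] [TopologicalSpace G] [CompactSpace G] [IsTopologicalGroup G]
  {F : G → ℝ}

theorem liminf_comp_pow_le (hF : Continuous F) (g : G) (k : ℕ) :
    liminf (fun m : ℕ => F (g ^ m)) atTop ≤ F (g ^ k) := by
  have hcluster : MapClusterPt (g ^ k) atTop (g ^ · : ℕ → G) := by
    simpa using mapClusterPt_self_zpow_atTop_pow g k
  have hbdd : BddBelow (Set.range fun m : ℕ => F (g ^ m)) :=
    (isCompact_range hF).bddBelow.mono (Set.range_comp_subset_range _ F)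
  exact (hcluster.continuousAt_comp hF.continuousAt).liminf_le hbdd.isBoundedUnder_of_range

theorem liminf_comp_pow_eq_iInf_pnat (hF : Continuous F) (g : G) :
    liminf (fun m : ℕ => F (g ^ m)) atTop = ⨅ k : ℕ+, F (g ^ (k : ℕ)) := by
  have hrange := isCompact_range hF
  have hbdd : BddAbove (Set.range fun m : ℕ => F (g ^ m)) :=
    hrange.bddAbove.mono (Set.range_comp_subset_range _ F)
  refine le_antisymm (le_ciInf fun k => liminf_comp_pow_le hF g k) ?_
  refine le_liminf_of_le hbdd.isBoundedUnder_of_range.isCoboundedUnder_ge ?_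
  filter_upwards [eventually_ge_atTop 1] with m hm
  exact ciInf_le (hrange.bddBelow.mono (Set.range_comp_subset_range _ F)) (⟨m, hm⟩ : ℕ+)

end CompactGroup

theorem liminf_eq_inf_power_sum_general
    (n : ℕ) (b z : ℕ → ℂ)
    (hzabs : ∀ j ∈ Finset.Icc 1 n, ‖z j‖ = 1) :
    Filter.liminf (fun k : ℕ => (∑ j ∈ Finset.Icc 1 n, b j * z j ^ k).re) Filter.atTop =
      ⨅ k : ℕ+, (∑ j ∈ Finset.Icc 1 n, b j * z j ^ (k : ℕ)).re := by
  let w : Finset.Icc 1 n → Circle := fun j => ⟨z j, mem_sphere_zero_iff_norm.2 (hzabs j j.2)⟩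
  let F : (Finset.Icc 1 n → Circle) → ℝ := fun x => (∑ j : Finset.Icc 1 n, b j * (x j : ℂ)).re
  have hF : Continuous F := by fun_prop
  have hsum (k : ℕ) : (∑ j ∈ Finset.Icc 1 n, b j * z j ^ k).re = F (w ^ k) := by
    rw [← Finset.sum_coe_sort]
    rfl
  simp only [hsum]
  exact liminf_comp_pow_eq_iInf_pnat hF w

/-- **Almost periodicity: liminf equals inf.**
For complex numbers `b 1, …, b n` and unimodular `z 1, …, z n`, the liminf as `k → ∞`
of the real parts of the power sums `∑ j, b j * z j ^ k` coincides with their infimum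
over all positive integers `k`. -/
theorem liminf_eq_inf_power_sum
    (n : ℕ) (hn : 1 ≤ n) (b z : ℕ → ℂ)
    (hzabs : ∀ j ∈ Finset.Icc 1 n, ‖z j‖ = 1) :
    Filter.liminf (fun k : ℕ => (∑ j ∈ Finset.Icc 1 n, b j * z j ^ k).re) Filter.atTop =
      ⨅ k : ℕ+, (∑ j ∈ Finset.Icc 1 n, b j * z j ^ (k : ℕ)).re :=
  liminf_eq_inf_power_sum_general n b z hzabs
end

section
/- Let m be a positive integer, let b_1, …, b_m be real numbers, and let α_1, …, α_m be real numbers such that the ℚ-linear span of α_1, …, α_m does not contain 1. Then inf_{k∈ℤ} ∑_{j=1}^m b_j cos(2π α_j k) = inf_{t∈ℝ} ∑_{j=1}^m b_j cos(2π α_j t); i.e., the infimum over integer arguments equals the infimum over real arguments. -/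
/-!
Fix `t` and suppose `c ≤ F k` for all `k ∈ ℕ`, where `F x = ∑ b_j cos (2π α_j x)`. Weight `F` by
the nonnegative trigonometric polynomial `Q x = |∑_{a ∈ [0, W)^m} e (a·α (x - t))|²`, whose
frequencies are the integer combinations `(a - a')·α`. As `1` is not a rational combination of the
`α_j`, such a combination is an integer only if it vanishes, so averaging over `k < K` and letting
`K → ∞` keeps exactly the zero frequencies: `c C_W ≤ ∑ b_j cos (2π α_j t) S_j(W)`, where `C_W` and
`S_j(W)` count the pairs `(a, a')` in the box with `(a - a')·α` equal to `0` and to `-α_j`. Moving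
one coordinate of `a` or `a'` by one gives `C_{W-1} ≤ S_j(W) ≤ C_{W+1}`, and since `C_W` grows only
polynomially, `C_{W+1} - C_{W-1} ≤ δ C_W` for some `W`; hence `c ≤ F t + δ ∑ |b_j|`.
-/

open Real Finset Filter Topology

namespace CosineInf

noncomputable section

def e (θ : ℝ) : ℂ := Complex.exp (↑(2 * π * θ) * Complex.I)

lemma e_add (x y : ℝ) : e (x + y) = e x * e y := by
  simp only [e, ← Complex.exp_add]
  congr 1
  push_cast
  ring

lemma conj_e (x : ℝ) : starRingEnd ℂ (e x) = e (-x) := by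
  simp only [e, ← Complex.exp_conj, map_mul, Complex.conj_ofReal, Complex.conj_I]
  congr 1
  push_cast
  ring

lemma norm_e (x : ℝ) : ‖e x‖ = 1 := Complex.norm_exp_ofReal_mul_I _

lemma re_e_mul (x y : ℝ) : (e (x * y)).re = Real.cos (2 * π * x * y) := by
  rw [e, Complex.exp_ofReal_mul_I_re]
  ring_nf

lemma e_mul_natCast (x : ℝ) (k : ℕ) : e (x * k) = e x ^ k := by
  rw [e, e, ← Complex.exp_nat_mul]
  congr 1
  push_cast
  ring

lemma e_ne_one {θ : ℝ} (hθ : ∀ q : ℤ, θ ≠ q) : e θ ≠ 1 := by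
  rw [e, Ne, Complex.exp_eq_one_iff]
  rintro ⟨q, hq⟩
  have h2π : (2 * π * Complex.I : ℂ) ≠ 0 := by simp [Real.pi_ne_zero, Complex.I_ne_zero]
  have : ((θ : ℂ) - q) * (2 * π * Complex.I) = 0 := by
    push_cast at hq
    linear_combination hq
  exact hθ q (by exact_mod_cast sub_eq_zero.1 ((mul_eq_zero.1 this).resolve_right h2π))

lemma tendsto_average_e_of_forall_ne_intCast {θ : ℝ} (hθ : ∀ q : ℤ, θ ≠ q) :
    Tendsto (fun K : ℕ => (K : ℂ)⁻¹ * ∑ k ∈ range K, e (θ * k)) atTop (𝓝 0) := by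
  have hbound : ∀ K : ℕ, ‖∑ k ∈ range K, e (θ * k)‖ ≤ 2 / ‖e θ - 1‖ := by
    intro K
    simp only [e_mul_natCast]
    rw [geom_sum_eq (e_ne_one hθ), norm_div]
    gcongr
    calc ‖e θ ^ K - 1‖ ≤ ‖e θ ^ K‖ + ‖(1 : ℂ)‖ := norm_sub_le _ _
      _ = 2 := by rw [norm_pow, norm_e]; norm_num
  refine squeeze_zero_norm (fun K => ?_)
    (by simpa using (tendsto_inv_atTop_nhds_zero_nat (𝕜 := ℝ)).mul_const (2 / ‖e θ - 1‖))
  rw [norm_mul, norm_inv, Complex.norm_natCast]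
  gcongr
  exact hbound K

lemma tendsto_average_sum_e {κ : Type*} (s : Finset κ) (c : κ → ℂ) (θ : κ → ℝ)
    (hθ : ∀ p ∈ s, ∀ q : ℤ, θ p = q → θ p = 0) :
    Tendsto (fun K : ℕ => (K : ℂ)⁻¹ * ∑ k ∈ range K, ∑ p ∈ s, c p * e (θ p * k)) atTop
      (𝓝 (∑ p ∈ s with θ p = 0, c p)) := by
  have hterm : ∀ p ∈ s, Tendsto (fun K : ℕ => c p * ((K : ℂ)⁻¹ * ∑ k ∈ range K, e (θ p * k)))
      atTop (𝓝 (if θ p = 0 then c p else 0)) := by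
    intro p hp
    by_cases h0 : θ p = 0
    · rw [if_pos h0]
      refine tendsto_const_nhds.congr' ?_
      filter_upwards [eventually_ne_atTop 0] with K hK
      simp [h0, e, hK]
    · rw [if_neg h0]
      simpa using
        (tendsto_average_e_of_forall_ne_intCast fun q hq => h0 (hθ p hp q hq)).const_mul (c p)
  rw [sum_filter]
  refine (tendsto_finsetSum s hterm).congr fun K => ?_
  rw [sum_comm, mul_sum]
  refine sum_congr rfl fun p _ => ?_
  rw [mul_sum, mul_sum, mul_sum]
  exact sum_congr rfl fun k _ => by ring

lemma mul_re_le_re_of_tendsto_average {f g : ℕ → ℂ} {x y : ℂ} (c : ℝ)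
    (hf : Tendsto (fun K : ℕ => (K : ℂ)⁻¹ * ∑ k ∈ range K, f k) atTop (𝓝 x))
    (hg : Tendsto (fun K : ℕ => (K : ℂ)⁻¹ * ∑ k ∈ range K, g k) atTop (𝓝 y))
    (hfg : ∀ k, c * (f k).re ≤ (g k).re) : c * x.re ≤ y.re := by
  refine le_of_tendsto_of_tendsto' (((Complex.continuous_re.tendsto x).comp hf).const_mul c)
    ((Complex.continuous_re.tendsto y).comp hg) fun K => ?_
  simp only [Function.comp, ← Complex.ofReal_natCast, ← Complex.ofReal_inv, Complex.re_ofReal_mul,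
    Complex.re_sum]
  rw [mul_left_comm, mul_sum]
  exact mul_le_mul_of_nonneg_left (sum_le_sum fun k _ => hfg k) (by positivity)

lemma sq_norm_sum_e {κ : Type*} (s : Finset κ) (ν : κ → ℝ) (y : ℝ) :
    ((‖∑ a ∈ s, e (ν a * y)‖ ^ 2 : ℝ) : ℂ) = ∑ p ∈ s ×ˢ s, e ((ν p.1 - ν p.2) * y) := by
  rw [Complex.ofReal_pow, ← Complex.mul_conj', map_sum, sum_mul_sum, sum_product]
  refine sum_congr rfl fun a _ => sum_congr rfl fun b _ => ?_
  rw [conj_e, ← e_add]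
  ring_nf

lemma eq_zero_of_mem_span_of_eq_intCast {S : Set ℝ} (hS : (1 : ℝ) ∉ Submodule.span ℚ S) {x : ℝ}
    (hx : x ∈ Submodule.span ℚ S) {q : ℤ} (hq : x = q) : x = 0 := by
  by_contra hx0
  have hq0 : (q : ℝ) ≠ 0 := hq ▸ hx0
  apply hS
  convert Submodule.smul_mem _ (q : ℚ)⁻¹ hx using 1
  rw [Rat.smul_def, hq]
  push_cast
  field_simp

lemma exists_sub_le_mul_of_le_pow {C : ℕ → ℕ} (hmono : Monotone C) (hC : 1 ≤ C 1) {d : ℕ}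
    (hbound : ∀ W, C W ≤ W ^ d) {δ : ℝ} (hδ : 0 < δ) :
    ∃ W, 1 ≤ W ∧ (C (W + 1) : ℝ) - C (W - 1) ≤ δ * C W := by
  by_contra! h
  have hgrowth : ∀ s : ℕ, (1 + δ) ^ s ≤ C (2 * s + 1) := by
    intro s
    induction s with
    | zero => simpa using hC
    | succ s ih =>
      have hstep := h (2 * s + 2) (by omega)
      have hmid : (C (2 * s + 1) : ℝ) ≤ C (2 * s + 2) := by exact_mod_cast hmono (by omega)
      rw [show 2 * s + 2 - 1 = 2 * s + 1 by omega] at hstep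
      rw [pow_succ, show 2 * (s + 1) + 1 = 2 * s + 2 + 1 by ring]
      nlinarith
  have hlim := (tendsto_pow_const_div_const_pow_of_one_lt d
    (lt_add_of_pos_right 1 hδ)).const_mul ((3 : ℝ) ^ d)
  rw [mul_zero] at hlim
  obtain ⟨s, hs, hs1⟩ :=
    ((hlim.eventually (gt_mem_nhds one_pos)).and (eventually_ge_atTop 1)).exists
  rw [mul_div_assoc', div_lt_one (by positivity), ← mul_pow] at hs
  have hs1' : (1 : ℝ) ≤ s := by exact_mod_cast hs1
  have : (C (2 * s + 1) : ℝ) ≤ (3 * s) ^ d := calc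
    (C (2 * s + 1) : ℝ) ≤ ((2 * s + 1 : ℕ) : ℝ) ^ d := by exact_mod_cast hbound _
    _ ≤ (3 * s) ^ d := by gcongr; push_cast; linarith
  linarith [hgrowth s]

lemma abs_mul_cos_le (b θ : ℝ) : |b * Real.cos θ| ≤ |b| := by
  rw [abs_mul]
  exact mul_le_of_le_one_right (abs_nonneg _) (abs_cos_le_one _)

section PairCount

variable {ι : Type*} [Fintype ι] (α : ι → ℝ)

def weight (a : ι → ℕ) : ℝ := ∑ i, (a i : ℝ) * α i

lemma weight_mem_span (a : ι → ℕ) : weight α a ∈ Submodule.span ℚ (Set.range α) :=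
  sum_mem fun i _ => by
    rw [← nsmul_eq_mul]
    exact nsmul_mem (Submodule.subset_span (Set.mem_range_self i)) _

def pairFreq (p : (ι → ℕ) × (ι → ℕ)) : ℝ := weight α p.1 - weight α p.2

lemma pairFreq_mem_span (p : (ι → ℕ) × (ι → ℕ)) : pairFreq α p ∈ Submodule.span ℚ (Set.range α) :=
  sub_mem (weight_mem_span α p.1) (weight_mem_span α p.2)

variable [DecidableEq ι]

def box (W : ℕ) : Finset (ι → ℕ) := Fintype.piFinset fun _ => range W

def pairCount (β : ℝ) (W : ℕ) : ℕ :=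
  #{p ∈ box W ×ˢ box W | pairFreq α p + β = 0}

omit [Fintype ι] in
lemma single_one_apply_le (j i : ι) : (Pi.single j 1 : ι → ℕ) i ≤ 1 := by
  rw [Pi.single_apply]
  split_ifs <;> omega

lemma mem_box {W : ℕ} {a : ι → ℕ} : a ∈ box W ↔ ∀ i, a i < W := by
  simp [box]

lemma weight_add_single (a : ι → ℕ) (j : ι) :
    weight α (a + Pi.single j 1) = weight α a + α j := by
  simp [weight, add_mul, sum_add_distrib, Pi.single_apply]

lemma pairCount_mono (β : ℝ) : Monotone (pairCount α β) := by
  intro V W hVW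
  have hbox : box (ι := ι) V ⊆ box W := fun a ha =>
    mem_box.2 fun i => (mem_box.1 ha i).trans_le hVW
  exact card_le_card (filter_subset_filter _ (product_subset_product hbox hbox))

lemma one_le_pairCount_zero {W : ℕ} (hW : 1 ≤ W) : 1 ≤ pairCount α 0 W := by
  apply card_pos.2
  exact ⟨(0, 0), by simp [mem_box, pairFreq, weight]; omega⟩

lemma pairCount_le_pow (β : ℝ) (W : ℕ) : pairCount α β W ≤ W ^ (2 * Fintype.card ι) := by
  refine (card_filter_le _ _).trans_eq ?_
  simp [box, Fintype.card_piFinset, card_product, pow_mul', sq]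

lemma pairCount_le_pairCount_succ (j : ι) (W : ℕ) :
    pairCount α (α j) W ≤ pairCount α 0 (W + 1) := by
  refine card_le_card_of_injOn (fun p => (p.1 + Pi.single j 1, p.2)) (fun p hp => ?_) ?_
  · simp only [coe_filter, mem_product, mem_box, Set.mem_ofPred_eq, Pi.add_apply] at hp ⊢
    refine ⟨⟨fun i => ?_, fun i => (hp.1.2 i).trans (lt_add_one W)⟩, ?_⟩
    · linarith [hp.1.1 i, single_one_apply_le j i]
    · simp only [pairFreq, weight_add_single] at hp ⊢
      linarith [hp.2]
  · intro p _ q _ h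
    simp only [Prod.mk.injEq, add_left_inj] at h
    exact Prod.ext h.1 h.2

lemma pairCount_pred_le_pairCount (j : ι) (W : ℕ) :
    pairCount α 0 (W - 1) ≤ pairCount α (α j) W := by
  refine card_le_card_of_injOn (fun p => (p.1, p.2 + Pi.single j 1)) (fun p hp => ?_) ?_
  · simp only [coe_filter, mem_product, mem_box, Set.mem_ofPred_eq, Pi.add_apply] at hp ⊢
    refine ⟨⟨fun i => ?_, fun i => ?_⟩, ?_⟩
    · have := hp.1.1 i
      omega
    · have := hp.1.2 i
      have := single_one_apply_le j i
      omega
    · simp only [pairFreq, weight_add_single] at hp ⊢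
      linarith [hp.2]
  · intro p _ q _ h
    simp only [Prod.mk.injEq, add_left_inj] at h
    exact Prod.ext h.1 h.2

lemma abs_pairCount_sub_le (j : ι) (W : ℕ) :
    |(pairCount α (α j) W : ℝ) - pairCount α 0 W| ≤
      pairCount α 0 (W + 1) - pairCount α 0 (W - 1) := by
  have h₁ : (pairCount α 0 (W - 1) : ℝ) ≤ pairCount α (α j) W := by
    exact_mod_cast pairCount_pred_le_pairCount α j W
  have h₂ : (pairCount α (α j) W : ℝ) ≤ pairCount α 0 (W + 1) := by
    exact_mod_cast pairCount_le_pairCount_succ α j W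
  have h₃ : (pairCount α 0 (W - 1) : ℝ) ≤ pairCount α 0 W := by
    exact_mod_cast pairCount_mono α 0 (Nat.sub_le W 1)
  have h₄ : (pairCount α 0 W : ℝ) ≤ pairCount α 0 (W + 1) := by
    exact_mod_cast pairCount_mono α 0 (Nat.le_succ W)
  rw [abs_le]
  constructor <;> linarith

end PairCount

section Kernel

variable {ι : Type*} [Fintype ι] [DecidableEq ι] (α b : ι → ℝ)

def boxKernel (W : ℕ) (t x : ℝ) : ℝ := ‖∑ a ∈ box (ι := ι) W, e (weight α a * (x - t))‖ ^ 2

lemma ofReal_boxKernel (W : ℕ) (t x : ℝ) : (boxKernel α W t x : ℂ) =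
    ∑ p ∈ box W ×ˢ box W, e (-(pairFreq α p * t)) * e (pairFreq α p * x) := by
  rw [boxKernel, sq_norm_sum_e]
  refine sum_congr rfl fun p _ => ?_
  rw [← e_add, pairFreq]
  ring_nf

variable {α}

lemma tendsto_average_boxKernel (hα : (1 : ℝ) ∉ Submodule.span ℚ (Set.range α)) (W : ℕ) (t : ℝ) :
    Tendsto (fun K : ℕ => (K : ℂ)⁻¹ * ∑ k ∈ range K, (boxKernel α W t k : ℂ)) atTop
      (𝓝 (pairCount α 0 W)) := by
  have := tendsto_average_sum_e (box W ×ˢ box W) (fun p => e (-(pairFreq α p * t)))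
    (pairFreq α) fun p _ _ => eq_zero_of_mem_span_of_eq_intCast hα (pairFreq_mem_span α p)
  convert this using 2
  · simp only [ofReal_boxKernel]
  · have hone (p : (ι → ℕ) × (ι → ℕ)) (hp : pairFreq α p = 0) : e (-(pairFreq α p * t)) = 1 := by
      simp [hp, e]
    rw [sum_congr rfl fun p hp => hone p (mem_filter.1 hp).2, sum_const, nsmul_one, pairCount]
    simp only [add_zero]

lemma tendsto_average_mul_boxKernel (hα : (1 : ℝ) ∉ Submodule.span ℚ (Set.range α)) (W : ℕ)
    (t : ℝ) :
    Tendsto (fun K : ℕ => (K : ℂ)⁻¹ * ∑ k ∈ range K, (∑ j, b j * e (α j * k)) * boxKernel α W t k)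
      atTop (𝓝 (∑ j, b j * e (α j * t) * pairCount α (α j) W)) := by
  have := tendsto_average_sum_e (univ ×ˢ (box W ×ˢ box W))
    (fun q => b q.1 * e (-(pairFreq α q.2 * t))) (fun q => pairFreq α q.2 + α q.1)
    fun q _ _ => eq_zero_of_mem_span_of_eq_intCast hα
      (add_mem (pairFreq_mem_span α q.2) (Submodule.subset_span (Set.mem_range_self q.1)))
  have hmul (x : ℝ) : (∑ j, b j * e (α j * x)) * boxKernel α W t x = ∑ q ∈ univ ×ˢ (box W ×ˢ box W),
      b q.1 * e (-(pairFreq α q.2 * t)) * e ((pairFreq α q.2 + α q.1) * x) := by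
    rw [ofReal_boxKernel, sum_mul_sum, sum_product]
    refine sum_congr rfl fun j _ => sum_congr rfl fun p _ => ?_
    rw [add_mul, e_add]
    ring
  convert this using 2
  · simp only [hmul]
  · rw [sum_filter, sum_product]
    refine sum_congr rfl fun j _ => ?_
    have hres (p : (ι → ℕ) × (ι → ℕ)) (hp : pairFreq α p + α j = 0) :
        b j * e (-(pairFreq α p * t)) = b j * e (α j * t) := by
      rw [eq_neg_of_add_eq_zero_left hp, neg_mul, neg_neg]
    rw [← sum_filter, sum_congr rfl fun p hp => hres p (mem_filter.1 hp).2, sum_const,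
      nsmul_eq_mul, pairCount]
    ring

end Kernel

section Main

variable {ι : Type*} [Fintype ι] (α b : ι → ℝ)

theorem mul_pairCount_zero_le [DecidableEq ι] (hα : (1 : ℝ) ∉ Submodule.span ℚ (Set.range α))
    {c : ℝ} (hc : ∀ k : ℕ, c ≤ ∑ i, b i * Real.cos (2 * π * α i * k)) (t : ℝ) (W : ℕ) :
    c * pairCount α 0 W ≤ ∑ j, b j * Real.cos (2 * π * α j * t) * pairCount α (α j) W := by
  have := mul_re_le_re_of_tendsto_average c (tendsto_average_boxKernel hα W t)
    (tendsto_average_mul_boxKernel b hα W t) fun k => by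
      simp only [Complex.ofReal_re, Complex.re_mul_ofReal, Complex.re_sum, Complex.re_ofReal_mul,
        re_e_mul]
      exact mul_le_mul_of_nonneg_right (hc k) (sq_nonneg _)
  simpa [re_e_mul] using this

lemma sum_mul_cos_mul_pairCount_le [DecidableEq ι] (t : ℝ) (W : ℕ) :
    ∑ j, b j * Real.cos (2 * π * α j * t) * pairCount α (α j) W ≤
      (∑ j, b j * Real.cos (2 * π * α j * t)) * pairCount α 0 W +
        (∑ j, |b j|) * (pairCount α 0 (W + 1) - pairCount α 0 (W - 1)) := by
  rw [sum_mul, sum_mul, ← sum_add_distrib]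
  refine sum_le_sum fun j _ => ?_
  calc b j * Real.cos (2 * π * α j * t) * pairCount α (α j) W
      = b j * Real.cos (2 * π * α j * t) * pairCount α 0 W +
          b j * Real.cos (2 * π * α j * t) * (pairCount α (α j) W - pairCount α 0 W) := by ring
    _ ≤ b j * Real.cos (2 * π * α j * t) * pairCount α 0 W +
          |b j| * (pairCount α 0 (W + 1) - pairCount α 0 (W - 1)) := by
      refine add_le_add le_rfl ((le_abs_self _).trans ?_)
      rw [abs_mul]
      exact mul_le_mul (abs_mul_cos_le _ _) (abs_pairCount_sub_le α j W) (abs_nonneg _)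
        (abs_nonneg _)

theorem le_sum_mul_cos_of_forall_natCast_le (hα : (1 : ℝ) ∉ Submodule.span ℚ (Set.range α))
    {c : ℝ} (hc : ∀ k : ℕ, c ≤ ∑ i, b i * Real.cos (2 * π * α i * k)) (t : ℝ) :
    c ≤ ∑ i, b i * Real.cos (2 * π * α i * t) := by
  classical
  refine le_of_forall_pos_le_add fun ε hε => ?_
  set B := ∑ i, |b i|
  have hB : 0 ≤ B := sum_nonneg fun i _ => abs_nonneg _
  obtain ⟨W, hW, hgrowth⟩ := exists_sub_le_mul_of_le_pow (pairCount_mono α 0)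
    (one_le_pairCount_zero α le_rfl) (pairCount_le_pow α 0) (by positivity : 0 < ε / (B + 1))
  have hC : (1 : ℝ) ≤ pairCount α 0 W := by exact_mod_cast one_le_pairCount_zero α hW
  have hεB : B * (ε / (B + 1)) ≤ ε := by
    rw [mul_div_assoc', div_le_iff₀ (by positivity)]
    nlinarith
  refine le_of_mul_le_mul_right ?_ (zero_lt_one.trans_le hC)
  calc c * pairCount α 0 W
      ≤ (∑ i, b i * Real.cos (2 * π * α i * t)) * pairCount α 0 W +
          B * (pairCount α 0 (W + 1) - pairCount α 0 (W - 1)) :=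
        (mul_pairCount_zero_le α b hα hc t W).trans (sum_mul_cos_mul_pairCount_le α b t W)
    _ ≤ (∑ i, b i * Real.cos (2 * π * α i * t)) * pairCount α 0 W +
          B * (ε / (B + 1) * pairCount α 0 W) := by gcongr
    _ ≤ (∑ i, b i * Real.cos (2 * π * α i * t) + ε) * pairCount α 0 W := by
      rw [← mul_assoc, add_mul]
      gcongr

end Main

lemma neg_sum_abs_le_sum_mul_cos {ι : Type*} (s : Finset ι) (b α : ι → ℝ) (x : ℝ) :
    -∑ j ∈ s, |b j| ≤ ∑ j ∈ s, b j * Real.cos (2 * π * α j * x) := by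
  rw [← sum_neg_distrib]
  exact sum_le_sum fun j _ => (neg_le_neg (abs_mul_cos_le _ _)).trans (neg_abs_le _)

end

end CosineInf

theorem cosine_inf_integer_eq_inf_real_general
    (m : ℕ) (b α : ℕ → ℝ)
    (hspan : (1 : ℝ) ∉ Submodule.span ℚ (α '' Set.Icc 1 m)) :
    (⨅ k : ℤ, ∑ j ∈ Finset.Icc 1 m, b j * Real.cos (2 * Real.pi * α j * k)) =
      ⨅ t : ℝ, ∑ j ∈ Finset.Icc 1 m, b j * Real.cos (2 * Real.pi * α j * t) := by
  have hα : (1 : ℝ) ∉ Submodule.span ℚ (Set.range fun j : Icc 1 m => α j) :=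
    fun h => hspan <| Submodule.span_mono (by
      rintro _ ⟨j, rfl⟩
      exact ⟨j, by simpa using (mem_Icc.1 j.2), rfl⟩) h
  have hbdd : BddBelow (Set.range fun t : ℝ =>
      ∑ j ∈ Icc 1 m, b j * Real.cos (2 * π * α j * t)) :=
    ⟨_, Set.forall_mem_range.2 (CosineInf.neg_sum_abs_le_sum_mul_cos _ b α)⟩
  have hbddℤ : BddBelow (Set.range fun k : ℤ =>
      ∑ j ∈ Icc 1 m, b j * Real.cos (2 * π * α j * k)) :=
    hbdd.mono <| Set.range_subset_iff.2 fun k => Set.mem_range_self (k : ℝ)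
  refine le_antisymm (le_ciInf fun t => ?_) (le_ciInf fun k => ciInf_le hbdd (k : ℝ))
  rw [← sum_coe_sort]
  refine CosineInf.le_sum_mul_cos_of_forall_natCast_le _ _ hα (fun k => ?_) t
  rw [sum_coe_sort (Icc 1 m) fun j => b j * Real.cos (2 * π * α j * k)]
  exact_mod_cast ciInf_le hbddℤ (k : ℤ)

/-- **Theorem 5 (Beukers–Tijdeman): the continuous case.**
Let `b 1, …, b m` and `α 1, …, α m` be real numbers such that the `ℚ`-linear span of
`α 1, …, α m` does not contain `1`.  Then the infimum over integers `k` of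
`∑ j, b j * cos (2π α j k)` equals the infimum over real `t` of
`∑ j, b j * cos (2π α j t)`. -/
theorem cosine_inf_integer_eq_inf_real
    (m : ℕ) (hm : 1 ≤ m) (b α : ℕ → ℝ)
    (hspan : (1 : ℝ) ∉ Submodule.span ℚ (α '' Set.Icc 1 m)) :
    (⨅ k : ℤ, ∑ j ∈ Finset.Icc 1 m, b j * Real.cos (2 * Real.pi * α j * k)) =
      ⨅ t : ℝ, ∑ j ∈ Finset.Icc 1 m, b j * Real.cos (2 * Real.pi * α j * t) :=
  cosine_inf_integer_eq_inf_real_general m b α hspan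
end

section
/- Let α_1, …, α_n be real numbers such that the ℚ-linear span of α_1, …, α_n does not contain 1, let t₀ be a real number, and let δ > 0. Then there exist integers k, k_1, …, k_n such that |α_j t₀ − α_j k − k_j| < δ for j = 1, …, n. -/
/-!
Let `G` be the closure of `ℤ v + ℤⁿ` in `ℝⁿ` and `V` the largest subspace contained in `G`.
Since `G` is closed, it meets a complement `W` of `V` discretely, and projecting `G` onto `W`
along `V` (which maps `G` into itself) gives a full lattice in `W`. If `v ∉ V`, a coordinate
of that lattice is a linear form taking integer values on `G` and a nonzero integer `c` at
`v`; evaluating it on `v = ∑ vᵢ eᵢ` writes `c` as an integer combination of the `vᵢ`, so `1`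
lies in their `ℚ`-span. Hence the whole line `ℝ v` lies in `G`, which is the approximation
claimed.
-/

open Filter Topology Submodule

theorem tendsto_floor_div_mul_nhdsGT_zero (t : ℝ) :
    Tendsto (fun r : ℝ => (⌊t / r⌋ : ℝ) * r) (𝓝[>] 0) (𝓝 t) := by
  have hlow : Tendsto (fun r : ℝ => t - r) (𝓝[>] 0) (𝓝 t) :=
    ((continuous_const.sub continuous_id).tendsto' 0 t (sub_zero t)).mono_left
      nhdsWithin_le_nhds
  refine tendsto_of_tendsto_of_tendsto_of_le_of_le' hlow tendsto_const_nhds ?_ ?_ <;>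
    filter_upwards [self_mem_nhdsWithin] with r (hr : 0 < r)
  · have := (div_le_iff₀ hr).1 (sub_le_iff_le_add.1 (Int.sub_one_lt_floor (t / r)).le)
    linarith [add_mul (⌊t / r⌋ : ℝ) 1 r]
  · exact (le_div_iff₀ hr).1 (Int.floor_le _)

namespace AddSubgroup

variable {E : Type*} [NormedAddCommGroup E] [NormedSpace ℝ E] (G : AddSubgroup E)

def lineality : Submodule ℝ E where
  carrier := {x | ∀ t : ℝ, t • x ∈ G}
  add_mem' hx hy t := by simpa [smul_add] using G.add_mem (hx t) (hy t)
  zero_mem' t := by simp [G.zero_mem]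
  smul_mem' c x hx t := by simpa [smul_smul] using hx (t * c)

theorem mem_of_mem_lineality {x : E} (hx : x ∈ G.lineality) : x ∈ G := by
  simpa using hx 1

variable {G}

theorem mem_lineality_of_tendsto (hG : IsClosed (G : Set E)) {g : ℕ → E} {r : ℕ → ℝ} {u : E}
    (hg : ∀ k, g k ∈ G) (hr : ∀ k, 0 < r k) (hr0 : Tendsto r atTop (𝓝 0))
    (hu : Tendsto (fun k => (r k)⁻¹ • g k) atTop (𝓝 u)) : u ∈ G.lineality := by
  intro t
  have hr0' : Tendsto r atTop (𝓝[>] 0) :=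
    tendsto_nhdsWithin_iff.2 ⟨hr0, Eventually.of_forall hr⟩
  refine hG.mem_of_tendsto (((tendsto_floor_div_mul_nhdsGT_zero t).comp hr0').smul hu)
    (Eventually.of_forall fun k => ?_)
  rw [Function.comp_apply, smul_smul, mul_assoc, mul_inv_cancel₀ (hr k).ne', mul_one,
    Int.cast_smul_eq_zsmul]
  exact G.zsmul_mem (hg k) _

variable [FiniteDimensional ℝ E]

theorem discreteTopology_comap_subtype_of_disjoint (hG : IsClosed (G : Set E)) {W : Submodule ℝ E}
    (hW : Disjoint W G.lineality) : DiscreteTopology (G.comap W.subtype.toAddMonoidHom) := by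
  rw [discreteTopology_iff_isOpen_singleton_zero, Metric.isOpen_singleton_iff]
  by_contra! h
  -- the directions of nonzero points of `G ∩ W` tending to `0` accumulate in `W ∩ G.lineality`
  choose x hx_lt hx_ne using fun k : ℕ => h (1 / (k + 1)) Nat.one_div_pos_of_nat
  set y : ℕ → E := fun k => ((x k : W) : E)
  have hy_pos : ∀ k, 0 < ‖y k‖ := fun k => norm_pos_iff.2 (by simpa [y] using hx_ne k)
  have hy0 : Tendsto (fun k => ‖y k‖) atTop (𝓝 0) :=
    squeeze_zero (fun k => norm_nonneg _) (fun k => by simpa [y] using (hx_lt k).le)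
      tendsto_one_div_add_atTop_nhds_zero_nat
  obtain ⟨u, hu_sphere, φ, hφ, hu⟩ := (isCompact_sphere (0 : E) 1).tendsto_subseq
    (x := fun k => ‖y k‖⁻¹ • y k) fun k => by simp [norm_smul, (hy_pos k).ne']
  have huV : u ∈ G.lineality := mem_lineality_of_tendsto hG (fun k => (x (φ k)).2)
    (fun k => hy_pos _) (hy0.comp hφ.tendsto_atTop) hu
  have huW : u ∈ W := W.closed_of_finiteDimensional.mem_of_tendsto hu
    (Eventually.of_forall fun k => W.smul_mem _ (x (φ k) : W).2)
  simp [Submodule.disjoint_def.1 hW u huW huV] at hu_sphere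

theorem exists_linearMap_intCast_of_notMem_lineality (hG : IsClosed (G : Set E))
    (hspan : span ℝ (G : Set E) = ⊤) {x : E} (hxV : x ∉ G.lineality) :
    ∃ φ : E →ₗ[ℝ] ℝ, (∀ g ∈ G, ∃ z : ℤ, φ g = z) ∧ φ x ≠ 0 := by
  obtain ⟨W, hVW⟩ := G.lineality.exists_isCompl
  let p : E →ₗ[ℝ] W := W.projectionOnto G.lineality hVW.symm
  have hpG : ∀ g ∈ G, (p g : E) ∈ G := fun g hg => by
    simpa [p, coe_projectionOnto_apply] using G.sub_mem hg
      (G.mem_of_mem_lineality (W.sub_projection_mem hVW.symm g))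
  let L : Submodule ℤ W := (G.comap W.subtype.toAddMonoidHom).toIntSubmodule
  have : DiscreteTopology L := discreteTopology_comap_subtype_of_disjoint hG hVW.symm.disjoint
  have : IsZLattice ℝ L := ⟨by
    rw [eq_top_iff, ← LinearMap.range_eq_top.2 (W.projectionOnto_surjective hVW.symm),
      LinearMap.range_eq_map, ← hspan, map_span]
    exact span_mono (Set.image_subset_iff.2 hpG)⟩
  let bL := Module.Free.chooseBasis ℤ L
  let b := bL.ofZLatticeBasis ℝ L
  obtain ⟨i, hi⟩ : ∃ i, b.repr (p x) i ≠ 0 := by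
    by_contra! h
    refine hxV ((W.projectionOnto_apply_eq_zero_iff hVW.symm).1 (b.repr.injective ?_))
    ext i
    simpa using h i
  refine ⟨b.coord i ∘ₗ p, fun g hg => ⟨bL.repr ⟨p g, hpG g hg⟩ i, ?_⟩, hi⟩
  exact bL.ofZLatticeBasis_repr_apply ℝ L ⟨p g, hpG g hg⟩ i

end AddSubgroup

variable {ι : Type*} [Fintype ι]

theorem one_mem_span_rat_of_sum_intCast_mul_eq {v : ι → ℝ} (m : ι → ℤ) {c : ℤ} (hc : c ≠ 0)
    (h : ∑ i, (m i : ℝ) * v i = c) : (1 : ℝ) ∈ span ℚ (Set.range v) := by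
  have hc_mem : (c : ℝ) ∈ span ℚ (Set.range v) := h ▸ sum_mem fun i _ => by
    rw [← Rat.cast_intCast, ← Rat.smul_def]
    exact smul_mem _ _ (subset_span ⟨i, rfl⟩)
  simpa [Rat.smul_def, hc] using smul_mem _ (c : ℚ)⁻¹ hc_mem

theorem smul_mem_closure_span_int_insert {v : ι → ℝ} (hv : (1 : ℝ) ∉ span ℚ (Set.range v))
    (t : ℝ) :
    t • v ∈ closure (span ℤ (insert v (Set.range (Pi.basisFun ℝ ι))) : Set (ι → ℝ)) := by
  let G :=
    (span ℤ (insert v (Set.range (Pi.basisFun ℝ ι)))).toAddSubgroup.topologicalClosure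
  have hG : IsClosed (G : Set (ι → ℝ)) := AddSubgroup.isClosed_topologicalClosure _
  have hsub : insert v (Set.range (Pi.basisFun ℝ ι)) ⊆ G :=
    fun w hw => AddSubgroup.le_topologicalClosure _ (subset_span hw)
  suffices v ∈ G.lineality from this t
  by_contra hvG
  have hspan : span ℝ (G : Set (ι → ℝ)) = ⊤ :=
    eq_top_iff.2 <| (Pi.basisFun ℝ ι).span_eq.ge.trans <|
      span_mono ((Set.subset_insert _ _).trans hsub)
  obtain ⟨φ, hφG, hφv⟩ := G.exists_linearMap_intCast_of_notMem_lineality hG hspan hvG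
  choose m hm using fun i => hφG _ (hsub (Set.mem_insert_of_mem _ ⟨i, rfl⟩))
  obtain ⟨c, hc⟩ := hφG v (hsub (Set.mem_insert _ _))
  have hc0 : c ≠ 0 := fun h0 => hφv (by simp [hc, h0])
  refine hv (one_mem_span_rat_of_sum_intCast_mul_eq m hc0 ?_)
  conv_rhs => rw [← hc, ← (Pi.basisFun ℝ ι).sum_repr v]
  simp [hm, mul_comm]

theorem exists_int_abs_mul_sub_lt {v : ι → ℝ} (hv : (1 : ℝ) ∉ span ℚ (Set.range v))
    (t : ℝ) {δ : ℝ} (hδ : 0 < δ) :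
    ∃ (k : ℤ) (K : ι → ℤ), ∀ i, |v i * t - v i * k - K i| < δ := by
  obtain ⟨y, hy, hdist⟩ :=
    Metric.mem_closure_iff.1 (smul_mem_closure_span_int_insert hv t) δ hδ
  obtain ⟨k, z, hz, rfl⟩ := mem_span_insert.1 hy
  choose K hK using fun i => by
    simpa using (Module.Basis.mem_span_iff_repr_mem ℤ (Pi.basisFun ℝ ι) z).1 hz i
  refine ⟨k, K, fun i => ?_⟩
  rw [dist_eq_norm, pi_norm_lt_iff hδ] at hdist
  convert hdist i using 1
  simp only [Real.norm_eq_abs, Pi.sub_apply, Pi.add_apply, Pi.smul_apply, smul_eq_mul,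
    zsmul_eq_mul, Pi.mul_apply, Pi.intCast_apply, hK]
  congr 1
  ring

theorem kronecker_approximation_consequence_general
    (n : ℕ) (α : ℕ → ℝ)
    (hspan : (1 : ℝ) ∉ Submodule.span ℚ (α '' Set.Icc 1 n))
    (t₀ : ℝ) (δ : ℝ) (hδ : 0 < δ) :
    ∃ (k : ℤ) (K : ℕ → ℤ), ∀ j ∈ Finset.Icc 1 n,
      |α j * t₀ - α j * (k : ℝ) - (K j : ℝ)| < δ := by
  have hrange : Set.range (fun j : Finset.Icc 1 n => α j) = α '' Set.Icc 1 n := by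
    ext; simp
  obtain ⟨k, K, hK⟩ := exists_int_abs_mul_sub_lt (hrange ▸ hspan) t₀ hδ
  refine ⟨k, fun j => if h : j ∈ Finset.Icc 1 n then K ⟨j, h⟩ else 0, fun j hj => ?_⟩
  simpa [hj] using hK ⟨j, hj⟩

/-- **Lemma 3 (Beukers–Tijdeman): a consequence of Kronecker's theorem.**
Let `α 1, …, α n` be real numbers whose `ℚ`-linear span does not contain `1`, let `t₀` be
real and `δ > 0`.  Then there exist integers `k, k 1, …, k n` with
`|α j * t₀ - α j * k - k j| < δ` for `j = 1, …, n`. -/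
theorem kronecker_approximation_consequence
    (n : ℕ) (hn : 1 ≤ n) (α : ℕ → ℝ)
    (hspan : (1 : ℝ) ∉ Submodule.span ℚ (α '' Set.Icc 1 n))
    (t₀ : ℝ) (δ : ℝ) (hδ : 0 < δ) :
    ∃ (k : ℤ) (K : ℕ → ℤ), ∀ j ∈ Finset.Icc 1 n,
      |α j * t₀ - α j * (k : ℝ) - (K j : ℝ)| < δ :=
  kronecker_approximation_consequence_general n α hspan t₀ δ hδ
end
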